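/- arXiv:1908.07019 — 3 statements merged into one kernel-verified Lean document; each statement's English description precedes it below -/
import Mathlib

section
/- Let (r,a,c) and (s,b,d) be two rank one data, and set C^1_{≤1} := {(h_i) ∈ C^1 : u^{max(0, r_i + s_i − e')} divides h_i in F[[u]] for every i}. Then the image of C^1_{≤1} in coker ∂ has F-dimension equal to dim_F ker ∂ + Σ_{i=0}^{f−1} #{ j ∈ Z : max(0, r_i + s_i − e') ≤ j < r_i and j ≡ r_i + c_i − d_i (mod m) }. (In the paper's formulation, this image is the subspace of Ext^1(M(r,a,c), M(s,b,d)) consisting of extensions of height at most 1.) -/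
open PowerSeries

noncomputable section

/-- The map `φ : Σ αₙ uⁿ ↦ Σ αₙ u^{p·n}` on `F⟦u⟧`. -/
noncomputable def phiPS (p : ℕ) (F : Type) [CommRing F] :
    PowerSeries F →ₗ[F] PowerSeries F where
  toFun g := PowerSeries.mk fun n => if p ∣ n then PowerSeries.coeff (R := F) (n / p) g else 0
  map_add' g h := by
    ext n
    by_cases hn : p ∣ n <;> simp [PowerSeries.coeff_mk, hn]
  map_smul' t g := by
    ext n
    by_cases hn : p ∣ n <;> simp [PowerSeries.coeff_mk, hn]

/-- The space of tuples `(μ_i)_{i ∈ ℤ/f}` of power series such that every nonzero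
coefficient of `μ_i` occurs in a degree `n` with `n ≡ γ i (mod m)`. -/
def Ctuples (F : Type) [Field F] (f m : ℕ) (γ : ZMod f → ZMod m) :
    Submodule F (ZMod f → PowerSeries F) where
  carrier := {μ | ∀ (i : ZMod f) (n : ℕ), PowerSeries.coeff (R := F) n (μ i) ≠ 0 → (n : ZMod m) = γ i}
  add_mem' := by
    intro μ ν hμ hν i n hn
    rw [Pi.add_apply, map_add] at hn
    by_cases h1 : PowerSeries.coeff (R := F) n (μ i) = 0
    · refine hν i n fun h2 => hn ?_
      rw [h1, h2, add_zero]
    · exact hμ i n h1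
  zero_mem' := by
    intro i n hn
    simp at hn
  smul_mem' := by
    intro t μ hμ i n hn
    refine hμ i n fun h => hn ?_
    rw [Pi.smul_apply, map_smul, h, smul_zero]

/-- The map `∂ : (μ_i)_i ↦ (−a_i u^{r_i} μ_i + b_i u^{s_i} φ(μ_{i−1}))_i`. -/
noncomputable def Dmap (p : ℕ) (F : Type) [Field F] (f : ℕ) (r s : ZMod f → ℕ)
    (a b : ZMod f → Fˣ) :
    (ZMod f → PowerSeries F) →ₗ[F] (ZMod f → PowerSeries F) :=
  LinearMap.pi fun i =>
    (LinearMap.mulLeft F (PowerSeries.C (R := F) (b i : F) * PowerSeries.X ^ s i)).comp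
        ((phiPS p F).comp (LinearMap.proj (i - 1)))
      - (LinearMap.mulLeft F (PowerSeries.C (R := F) (a i : F) * PowerSeries.X ^ r i)).comp
        (LinearMap.proj i)

/-- The subspace of tuples `(h_i)` with `u^{k_i} ∣ h_i` for all `i`. -/
def Cdvd (F : Type) [Field F] (f : ℕ) (k : ZMod f → ℕ) :
    Submodule F (ZMod f → PowerSeries F) where
  carrier := {h | ∀ i, (PowerSeries.X : PowerSeries F) ^ k i ∣ h i}
  add_mem' := by
    intro g h hg hh i
    rw [Pi.add_apply]
    exact dvd_add (hg i) (hh i)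
  zero_mem' := by intro i; simp
  smul_mem' := by
    intro t h hh i
    rw [Pi.smul_apply, Algebra.smul_def]
    exact Dvd.dvd.mul_left (hh i) _

/-!
Put `N := e' + 1`, so that `r i, s i < N`. Comparing coefficients of `u ^ (n + r i)` in `∂μ = h`
gives `a i • μ_i[n] = b i • μ_{i-1}[(n + r i - s i) / p] - h_i[n + r i]` (the middle term only
when `p ∣ n + r i - s i`), and for `n ≥ N` the index `(n + r i - s i) / p` is `< n`. Hence `∂` maps the tuples of valuation `≥ N` bijectively onto the
tuples whose `i`-th component has valuation `≥ N + r i`, compatibly with the congruence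
conditions defining `C⁰` and `C¹`. Every component of `∂μ` is divisible by
`u ^ min (r i) (s i)`, so `∂` lands in `C¹_{≤1}`. Therefore `ker ∂` and the image of `C¹_{≤1}` in
`coker ∂` are the kernel and cokernel of the map induced by `∂` between the finite-dimensional
quotients of `C⁰` and `C¹_{≤1}` by these high-valuation subspaces. Their dimensions count the
admissible degrees in `[0, N)` and in `[r i + s i - e', N + r i)`, and the difference of the two
counts is the sum in the statement.
-/

section Snake

variable {K V W : Type*} [Field K] [AddCommGroup V] [Module K V] [AddCommGroup W] [Module K W]

/-- If `D` maps `V'` isomorphically onto `W'`, then `D` and the induced map `V ⧸ V' → W ⧸ W'`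
have the same kernel and cokernel. -/
theorem LinearMap.finrank_quotient_range_add_of_map_eq (D : V →ₗ[K] W) (V' : Submodule K V)
    (W' : Submodule K W) (hmap : V'.map D = W') (hdisj : Disjoint V' D.ker)
    [FiniteDimensional K (V ⧸ V')] [FiniteDimensional K (W ⧸ W')] :
    FiniteDimensional K D.ker ∧ FiniteDimensional K (W ⧸ D.range) ∧
      Module.finrank K (W ⧸ D.range) + Module.finrank K (V ⧸ V') =
        Module.finrank K D.ker + Module.finrank K (W ⧸ W') := by
  set Dbar := V'.mapQ W' D (hmap ▸ Submodule.le_comap_map D V')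
  have hker : D.ker ≃ₗ[K] Dbar.ker := by
    refine LinearEquiv.ofBijective (V'.mkQ.restrict fun x hx => ?_) ⟨?_, ?_⟩
    · rw [LinearMap.mem_ker] at hx ⊢
      simp [Dbar, hx]
    · rintro ⟨x, hx⟩ ⟨y, hy⟩ hxy
      have hV' : x - y ∈ V' := (Submodule.Quotient.eq V').mp (congrArg Subtype.val hxy)
      exact Subtype.ext (sub_eq_zero.mp (Submodule.disjoint_def.mp hdisj _ hV' (sub_mem hx hy)))
    · rintro ⟨q, hq⟩
      obtain ⟨v, rfl⟩ := V'.mkQ_surjective q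
      obtain ⟨v', hv', hDv'⟩ : D v ∈ V'.map D := by
        rw [hmap, ← Submodule.Quotient.mk_eq_zero]
        simpa [Dbar] using hq
      refine ⟨⟨v - v', by simp [hDv']⟩, Subtype.ext ?_⟩
      simpa [Submodule.Quotient.eq] using hv'
  have hcoker : (W ⧸ D.range) ≃ₗ[K] ((W ⧸ W') ⧸ Dbar.range) := by
    rw [Submodule.range_mapQ]
    exact (Submodule.quotientQuotientEquivQuotient W' D.range
      (hmap ▸ LinearMap.map_le_range)).symm
  have : FiniteDimensional K D.ker := Module.Finite.equiv hker.symm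
  have : FiniteDimensional K (W ⧸ D.range) := Module.Finite.equiv hcoker.symm
  refine ⟨inferInstance, inferInstance, ?_⟩
  have h₁ := Dbar.finrank_range_add_finrank_ker
  have h₂ := Dbar.range.finrank_quotient_add_finrank
  rw [hker.finrank_eq, hcoker.finrank_eq]
  omega

def Submodule.mapMkQEquivQuotientComap (P H : Submodule K W) :
    H.map P.mkQ ≃ₗ[K] H ⧸ P.comap H.subtype :=
  have hker : (P.mkQ ∘ₗ H.subtype).ker = P.comap H.subtype := by
    rw [LinearMap.ker_comp, Submodule.ker_mkQ]
  have hrange : (P.mkQ ∘ₗ H.subtype).range = H.map P.mkQ := by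
    rw [LinearMap.range_comp, Submodule.range_subtype]
  (LinearEquiv.ofEq _ _ hrange.symm).trans
    ((P.mkQ ∘ₗ H.subtype).quotKerEquivRange.symm.trans (Submodule.quotEquivOfEq _ _ hker))

theorem LinearMap.finrank_map_mkQ_range_add_of_map_eq (D : V →ₗ[K] W) (H : Submodule K W)
    (hDH : D.range ≤ H) (V' : Submodule K V) (W' : Submodule K W) (hmap : V'.map D = W')
    (hdisj : Disjoint V' D.ker)
    [FiniteDimensional K (V ⧸ V')] [FiniteDimensional K (H ⧸ W'.comap H.subtype)] :
    FiniteDimensional K (H.map D.range.mkQ) ∧ FiniteDimensional K D.ker ∧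
      Module.finrank K (H.map D.range.mkQ) + Module.finrank K (V ⧸ V') =
        Module.finrank K D.ker + Module.finrank K (H ⧸ W'.comap H.subtype) := by
  set DH := D.codRestrict H fun v => hDH (LinearMap.mem_range_self D v)
  have hmapH : V'.map DH = W'.comap H.subtype := by
    ext ⟨w, hw⟩
    simp [DH, ← hmap, Subtype.ext_iff]
  obtain ⟨hker, hcoker, hrank⟩ :=
    DH.finrank_quotient_range_add_of_map_eq V' _ hmapH (by rwa [LinearMap.ker_codRestrict])
  rw [LinearMap.ker_codRestrict, LinearMap.range_codRestrict] at *
  have e := Submodule.mapMkQEquivQuotientComap D.range H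
  exact ⟨Module.Finite.equiv e.symm, hker, by rw [e.finrank_eq, hrank]⟩

end Snake

theorem natCast_eq_mul_div_add {R : Type*} [Semiring R] {j k q : ℕ} (hk : k ≤ j)
    (hq : q ∣ j - k) : (j : R) = q * ((j - k) / q : ℕ) + k := by
  rw [← Nat.cast_mul, Nat.mul_div_cancel' hq, ← Nat.cast_add, Nat.sub_add_cancel hk]

theorem add_sub_div_lt {n k l q : ℕ} (hq : 2 ≤ q) (hk : k < n) : (n + k - l) / q < n := by
  rw [Nat.div_lt_iff_lt_mul (by omega)]
  have := Nat.mul_le_mul_left n hq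
  omega

theorem card_filter_Ico_add {m l r N : ℕ} (γ : ZMod m) (hl : l ≤ r) :
    ((Finset.Ico l (N + r)).filter fun j : ℕ => (j : ZMod m) = r + γ).card =
      ((Finset.Ico l r).filter fun j : ℕ => (j : ZMod m) = r + γ).card +
        ((Finset.Ico 0 N).filter fun j : ℕ => (j : ZMod m) = γ).card := by
  simp only [Finset.card_filter]
  rw [← Finset.sum_Ico_consecutive _ hl (Nat.le_add_left r N),
    Finset.sum_Ico_eq_sum_range _ r (N + r), Nat.add_sub_cancel, ← Finset.range_eq_Ico]
  simp [Nat.cast_add]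

section PowerSeries

variable {R : Type} [CommRing R] {p : ℕ}

theorem coeff_phiPS (g : PowerSeries R) (n : ℕ) :
    coeff n (phiPS p R g) = if p ∣ n then coeff (n / p) g else 0 := by
  simp [phiPS, coeff_mk]

theorem X_pow_mul_dvd_phiPS {k : ℕ} {g : PowerSeries R} (hg : X ^ k ∣ g) :
    X ^ (p * k) ∣ phiPS p R g := by
  rw [X_pow_dvd_iff] at hg ⊢
  intro n hn
  rw [coeff_phiPS]
  split_ifs with hdvd
  · obtain ⟨q, rfl⟩ := hdvd
    have hp : 0 < p := Nat.pos_of_ne_zero (by rintro rfl; simp at hn)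
    rw [Nat.mul_div_cancel_left q hp]
    exact hg q (Nat.lt_of_mul_lt_mul_left hn)
  · rfl

theorem coeff_C_mul_X_pow_mul (t : R) (g : PowerSeries R) (k j : ℕ) :
    coeff j (C t * X ^ k * g) = t * if k ≤ j then coeff (j - k) g else 0 := by
  rw [mul_assoc, coeff_C_mul, mul_comm (X ^ k), coeff_mul_X_pow']

end PowerSeries

section Cdvd

variable {F : Type} [Field F] {f m : ℕ}

theorem mem_Cdvd_iff {k : ZMod f → ℕ} {x : ZMod f → PowerSeries F} :
    x ∈ Cdvd F f k ↔ ∀ i n, n < k i → coeff n (x i) = 0 :=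
  forall_congr' fun _ => X_pow_dvd_iff

theorem Cdvd_zero : Cdvd F f 0 = ⊤ :=
  eq_top_iff.mpr fun x _ i => by simp

theorem Cdvd_anti {k l : ZMod f → ℕ} (hkl : ∀ i, k i ≤ l i) : Cdvd F f l ≤ Cdvd F f k :=
  fun _ hx i => (pow_dvd_pow X (hkl i)).trans (hx i)

variable [NeZero f] {M : Type*} [AddCommGroup M] [Module F M]

def coeffsOn (T : ZMod f → Finset ℕ) : (ZMod f → PowerSeries F) →ₗ[F] ((Σ i, T i) → F) :=
  LinearMap.pi fun z => (coeff (R := F) z.2.1).comp (LinearMap.proj z.1)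

theorem finrank_quotient_comap_Cdvd (ev : M →ₗ[F] (ZMod f → PowerSeries F)) (k : ZMod f → ℕ)
    (T : ZMod f → Finset ℕ) (hT : ∀ i, ∀ n ∈ T i, n < k i)
    (hsupp : ∀ x i n, n < k i → n ∉ T i → coeff n (ev x i) = 0)
    (hrange : ∀ y : ZMod f → PowerSeries F, (∀ i n, coeff n (y i) ≠ 0 → n ∈ T i) →
      y ∈ LinearMap.range ev) :
    FiniteDimensional F (M ⧸ (Cdvd F f k).comap ev) ∧
      Module.finrank F (M ⧸ (Cdvd F f k).comap ev) = ∑ i, (T i).card := by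
  set g := coeffsOn T ∘ₗ ev
  have hker : LinearMap.ker g = (Cdvd F f k).comap ev := by
    ext x
    simp only [LinearMap.mem_ker, Submodule.mem_comap, mem_Cdvd_iff]
    constructor
    · intro hx i n hn
      by_cases hnT : n ∈ T i
      · exact congrFun hx ⟨i, n, hnT⟩
      · exact hsupp x i n hn hnT
    · intro hx
      funext z
      exact hx z.1 z.2 (hT _ _ z.2.2)
  have hsurj : Function.Surjective g := by
    intro φ
    obtain ⟨x, hx⟩ := hrange (fun i => mk fun n => if hn : n ∈ T i then φ ⟨i, n, hn⟩ else 0)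
      fun i n hn => by
        by_contra hnT
        simp [coeff_mk, hnT] at hn
    exact ⟨x, by funext z; simp [g, coeffsOn, hx, coeff_mk]⟩
  have e := (Submodule.quotEquivOfEq _ _ hker.symm).trans (g.quotKerEquivOfSurjective hsurj)
  refine ⟨Module.Finite.equiv e.symm, ?_⟩
  rw [e.finrank_eq, Module.finrank_fintype_fun_eq_card, Fintype.card_sigma]
  simp

theorem finrank_quotient_comap_Cdvd_of_range_eq (ev : M →ₗ[F] (ZMod f → PowerSeries F))
    (γ : ZMod f → ZMod m) (l k : ZMod f → ℕ)
    (hev : LinearMap.range ev = Ctuples F f m γ ⊓ Cdvd F f l) :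
    FiniteDimensional F (M ⧸ (Cdvd F f k).comap ev) ∧
      Module.finrank F (M ⧸ (Cdvd F f k).comap ev) =
        ∑ i, ((Finset.Ico (l i) (k i)).filter fun n : ℕ => (n : ZMod m) = γ i).card := by
  refine finrank_quotient_comap_Cdvd ev k _
    (fun i n hn => (Finset.mem_Ico.mp (Finset.mem_filter.mp hn).1).2) (fun x i n hn hnT => ?_)
    (fun y hy => ?_)
  · have hx : ev x ∈ Ctuples F f m γ ⊓ Cdvd F f l := hev ▸ LinearMap.mem_range_self ev x
    by_contra hne
    refine hnT (Finset.mem_filter.mpr ⟨Finset.mem_Ico.mpr ⟨?_, hn⟩, hx.1 i n hne⟩)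
    by_contra hlt
    exact hne (mem_Cdvd_iff.mp hx.2 i n (Nat.lt_of_not_le hlt))
  · rw [hev]
    refine ⟨fun i n hn => (Finset.mem_filter.mp (hy i n hn)).2, mem_Cdvd_iff.mpr fun i n hn => ?_⟩
    by_contra hne
    have := (Finset.mem_Ico.mp (Finset.mem_filter.mp (hy i n hne)).1).1
    omega

end Cdvd

section Dmap

variable {p : ℕ} {F : Type} [Field F] {f m N : ℕ} {r s : ZMod f → ℕ} {a b : ZMod f → Fˣ}
  {μ : ZMod f → PowerSeries F}

theorem Dmap_apply (μ : ZMod f → PowerSeries F) (i : ZMod f) :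
    Dmap p F f r s a b μ i =
      C (b i : F) * X ^ s i * phiPS p F (μ (i - 1)) - C (a i : F) * X ^ r i * μ i := by
  simp [Dmap, mul_assoc]

theorem coeff_Dmap (μ : ZMod f → PowerSeries F) (i : ZMod f) (j : ℕ) :
    coeff j (Dmap p F f r s a b μ i) =
      b i * (if s i ≤ j ∧ p ∣ j - s i then coeff ((j - s i) / p) (μ (i - 1)) else 0)
        - a i * (if r i ≤ j then coeff (j - r i) (μ i) else 0) := by
  rw [Dmap_apply, map_sub, coeff_C_mul_X_pow_mul, coeff_C_mul_X_pow_mul, coeff_phiPS]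
  by_cases h₁ : s i ≤ j <;> by_cases h₂ : p ∣ j - s i <;> simp [h₁, h₂]

theorem coeff_add_Dmap {n : ℕ} {i : ZMod f} (hsn : s i ≤ n + r i) :
    coeff (n + r i) (Dmap p F f r s a b μ i) =
      b i * (if p ∣ n + r i - s i then coeff ((n + r i - s i) / p) (μ (i - 1)) else 0)
        - a i * coeff n (μ i) := by
  simp [coeff_Dmap, hsn]

theorem Dmap_mem_Cdvd_min (μ : ZMod f → PowerSeries F) :
    Dmap p F f r s a b μ ∈ Cdvd F f fun i => min (r i) (s i) := by
  intro i
  rw [Dmap_apply]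
  exact dvd_sub (((pow_dvd_pow X (min_le_right _ _)).mul_left _).mul_right _)
    (((pow_dvd_pow X (min_le_left _ _)).mul_left _).mul_right _)

theorem Dmap_mem_Cdvd_add (hp : 2 ≤ p) (hrN : ∀ i, r i ≤ N) (hμ : μ ∈ Cdvd F f fun _ => N) :
    Dmap p F f r s a b μ ∈ Cdvd F f fun i => N + r i := by
  intro i
  rw [Dmap_apply, mul_assoc, mul_assoc]
  refine dvd_sub (dvd_mul_of_dvd_right ?_ _) (dvd_mul_of_dvd_right ?_ _)
  · calc X ^ (N + r i) ∣ X ^ (s i + p * N) := pow_dvd_pow X (by nlinarith [hrN i])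
        _ = X ^ s i * X ^ (p * N) := pow_add X _ _
        _ ∣ X ^ s i * phiPS p F (μ (i - 1)) := mul_dvd_mul_left _ (X_pow_mul_dvd_phiPS (hμ _))
  · show X ^ (N + r i) ∣ _
    rw [add_comm, pow_add]
    exact mul_dvd_mul_left _ (hμ i)

theorem eq_zero_of_Dmap_eq_zero (hp : 2 ≤ p) (hrN : ∀ i, r i < N) (hsN : ∀ i, s i ≤ N)
    (hμ : μ ∈ Cdvd F f fun _ => N) (hD : Dmap p F f r s a b μ = 0) : μ = 0 := by
  suffices h : ∀ n i, coeff n (μ i) = 0 from funext fun i => PowerSeries.ext fun n => h n i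
  intro n
  induction n using Nat.strong_induction_on with
  | _ n ih =>
    intro i
    by_cases hn : n < N
    · exact mem_Cdvd_iff.mp hμ i n hn
    have hrec := congrArg (coeff (n + r i)) (congrFun hD i)
    rw [coeff_add_Dmap (by linarith [hsN i]), ih _ (add_sub_div_lt hp (by linarith [hrN i]))]
      at hrec
    simpa using hrec

variable {γ : ZMod f → ZMod m}

theorem Dmap_mem_Ctuples (hγ : ∀ i, (p : ZMod m) * γ (i - 1) + s i = r i + γ i)
    (hμ : μ ∈ Ctuples F f m γ) : Dmap p F f r s a b μ ∈ Ctuples F f m fun i => r i + γ i := by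
  intro i j hj
  rw [coeff_Dmap] at hj
  have hterm : (if s i ≤ j ∧ p ∣ j - s i then coeff ((j - s i) / p) (μ (i - 1)) else 0) ≠ 0 ∨
      (if r i ≤ j then coeff (j - r i) (μ i) else 0) ≠ 0 := by
    by_contra! h
    simp [h.1, h.2] at hj
  rcases hterm with hφ | hφ
  · split_ifs at hφ with hsj
    · rw [natCast_eq_mul_div_add hsj.1 hsj.2, hμ _ _ hφ, hγ]
    · exact absurd rfl hφ
  · split_ifs at hφ with hrj
    · rw [← Nat.sub_add_cancel hrj, Nat.cast_add, hμ _ _ hφ, add_comm]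
    · exact absurd rfl hφ

theorem mem_Ctuples_of_Dmap_mem_Ctuples (hp : 2 ≤ p) (hrN : ∀ i, r i < N) (hsN : ∀ i, s i ≤ N)
    (hγ : ∀ i, (p : ZMod m) * γ (i - 1) + s i = r i + γ i) (hμ : μ ∈ Cdvd F f fun _ => N)
    (hD : Dmap p F f r s a b μ ∈ Ctuples F f m fun i => r i + γ i) : μ ∈ Ctuples F f m γ := by
  intro i n
  induction n using Nat.strong_induction_on generalizing i with
  | _ n ih =>
    intro hn
    by_cases hnN : n < N
    · exact absurd (mem_Cdvd_iff.mp hμ i n hnN) hn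
    have hsn : s i ≤ n + r i := by linarith [hsN i]
    by_cases hφ : p ∣ n + r i - s i ∧ coeff ((n + r i - s i) / p) (μ (i - 1)) ≠ 0
    · obtain ⟨hdvd, hne⟩ := hφ
      have hq := ih _ (add_sub_div_lt hp (by linarith [hrN i])) (i - 1) hne
      have hcast : ((n + r i : ℕ) : ZMod m) = p * γ (i - 1) + s i := by
        rw [natCast_eq_mul_div_add hsn hdvd, hq]
      push_cast at hcast
      linear_combination hcast + hγ i
    · have hφ0 :
          (if p ∣ n + r i - s i then coeff ((n + r i - s i) / p) (μ (i - 1)) else 0) = 0 := by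
        split_ifs with hdvd
        · exact not_not.mp fun hne => hφ ⟨hdvd, hne⟩
        · rfl
      have hcast := hD i (n + r i) (by simpa [coeff_add_Dmap hsn, hφ0] using hn)
      push_cast at hcast
      linear_combination hcast

end Dmap

section Solution

variable {F : Type} [Field F] {f : ℕ} (p N : ℕ) (r s : ZMod f → ℕ) (a b : ZMod f → Fˣ)
  (h : ZMod f → PowerSeries F)

/-- The condition `(n + r i - s i) / p < n` always holds when `2 ≤ p` and `r i < N ≤ n`; it only
makes the recursion visibly well founded. -/
def solCoeff (n : ℕ) (i : ZMod f) : F :=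
  if N ≤ n then
    (a i : F)⁻¹ * (b i * (if hq : p ∣ n + r i - s i ∧ (n + r i - s i) / p < n then
      solCoeff ((n + r i - s i) / p) (i - 1) else 0) - coeff (n + r i) (h i))
  else 0
termination_by n
decreasing_by exact hq.2

def solTuple : ZMod f → PowerSeries F := fun i => mk fun n => solCoeff p N r s a b h n i

variable {p N r s a b h}

theorem solCoeff_of_lt {n : ℕ} (hn : n < N) (i : ZMod f) : solCoeff p N r s a b h n i = 0 := by
  rw [solCoeff.eq_1, if_neg (Nat.not_le.mpr hn)]

theorem mul_solCoeff {n : ℕ} {i : ZMod f} (hp : 2 ≤ p) (hrN : r i < N) (hn : N ≤ n) :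
    a i * solCoeff p N r s a b h n i =
      b i * (if p ∣ n + r i - s i then solCoeff p N r s a b h ((n + r i - s i) / p) (i - 1)
        else 0) - coeff (n + r i) (h i) := by
  have hlt := add_sub_div_lt (l := s i) hp (lt_of_lt_of_le hrN hn)
  rw [solCoeff.eq_1, if_pos hn, ← mul_assoc, mul_inv_cancel₀ (a i).ne_zero, one_mul]
  by_cases hdvd : p ∣ n + r i - s i <;> simp [hdvd, hlt]

theorem solTuple_mem_Cdvd : solTuple p N r s a b h ∈ Cdvd F f fun _ => N :=
  mem_Cdvd_iff.mpr fun i n hn => by simp only [solTuple, coeff_mk, solCoeff_of_lt hn]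

theorem Dmap_solTuple (hp : 2 ≤ p) (hrN : ∀ i, r i < N) (hsN : ∀ i, s i ≤ N)
    (hh : h ∈ Cdvd F f fun i => N + r i) : Dmap p F f r s a b (solTuple p N r s a b h) = h := by
  funext i
  ext j
  by_cases hj : j < N + r i
  · rw [mem_Cdvd_iff.mp hh i j hj, mem_Cdvd_iff.mp (Dmap_mem_Cdvd_add hp (fun i => (hrN i).le)
      solTuple_mem_Cdvd) i j hj]
  obtain ⟨n, rfl⟩ : ∃ n, j = n + r i := ⟨j - r i, by omega⟩
  rw [coeff_add_Dmap (by linarith [hsN i])]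
  simp only [solTuple, coeff_mk]
  rw [mul_solCoeff hp (hrN i) (by omega)]
  ring

end Solution

section Restrict

variable {p : ℕ} {F : Type} [Field F] {f m : ℕ} {r s : ZMod f → ℕ} (a b : ZMod f → Fˣ)
  {γ : ZMod f → ZMod m} (hγ : ∀ i, (p : ZMod m) * γ (i - 1) + s i = r i + γ i)

def restrictDmap : Ctuples F f m γ →ₗ[F] Ctuples F f m fun i => r i + γ i :=
  (Dmap p F f r s a b ∘ₗ (Ctuples F f m γ).subtype).codRestrict _ fun μ => Dmap_mem_Ctuples hγ μ.2

theorem range_restrictDmap :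
    (restrictDmap a b hγ).range =
      (Submodule.map (Dmap p F f r s a b) (Ctuples F f m γ)).comap
        (Ctuples F f m fun i => r i + γ i).subtype := by
  rw [restrictDmap, LinearMap.range_codRestrict, LinearMap.range_comp, Submodule.range_subtype]

theorem ker_restrictDmap :
    (restrictDmap a b hγ).ker =
      (LinearMap.ker (Dmap p F f r s a b)).comap (Ctuples F f m γ).subtype := by
  rw [restrictDmap, LinearMap.ker_codRestrict, LinearMap.ker_comp]

theorem range_restrictDmap_le {l : ZMod f → ℕ} (hl : ∀ i, l i ≤ min (r i) (s i)) :
    (restrictDmap a b hγ).range ≤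
      (Cdvd F f l).comap (Ctuples F f m fun i => r i + γ i).subtype := by
  rintro _ ⟨μ, rfl⟩
  exact Cdvd_anti hl (Dmap_mem_Cdvd_min μ.1)

variable {N : ℕ} (hp : 2 ≤ p) (hrN : ∀ i, r i < N) (hsN : ∀ i, s i ≤ N)
include hp hrN hsN

theorem map_restrictDmap_Cdvd :
    ((Cdvd F f fun _ => N).comap (Ctuples F f m γ).subtype).map (restrictDmap a b hγ) =
      (Cdvd F f fun i => N + r i).comap (Ctuples F f m fun i => r i + γ i).subtype := by
  ext w
  constructor
  · rintro ⟨μ, hμ, rfl⟩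
    exact Dmap_mem_Cdvd_add hp (fun i => (hrN i).le) hμ
  · intro hw
    have hsol : Dmap p F f r s a b (solTuple p N r s a b w.1) = w.1 := Dmap_solTuple hp hrN hsN hw
    have hC0 := mem_Ctuples_of_Dmap_mem_Ctuples hp hrN hsN hγ solTuple_mem_Cdvd
      (by rw [hsol]; exact w.2)
    exact ⟨⟨_, hC0⟩, solTuple_mem_Cdvd, Subtype.ext hsol⟩

theorem disjoint_Cdvd_ker_restrictDmap :
    Disjoint ((Cdvd F f fun _ => N).comap (Ctuples F f m γ).subtype) (restrictDmap a b hγ).ker :=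
  Submodule.disjoint_def.mpr fun _ hμ hker =>
    Subtype.ext (eq_zero_of_Dmap_eq_zero hp hrN hsN hμ (congrArg Subtype.val hker))

theorem finrank_map_mkQ_range_restrictDmap_add [NeZero f] {l : ZMod f → ℕ}
    (hl : ∀ i, l i ≤ min (r i) (s i)) :
    let H := (Cdvd F f l).comap (Ctuples F f m fun i => r i + γ i).subtype
    FiniteDimensional F (H.map (restrictDmap a b hγ).range.mkQ) ∧
      FiniteDimensional F (restrictDmap a b hγ).ker ∧
      Module.finrank F (H.map (restrictDmap a b hγ).range.mkQ) +
          ∑ i, ((Finset.Ico 0 N).filter fun n : ℕ => (n : ZMod m) = γ i).card =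
        Module.finrank F (restrictDmap a b hγ).ker +
          ∑ i, ((Finset.Ico (l i) (N + r i)).filter
            fun n : ℕ => (n : ZMod m) = r i + γ i).card := by
  intro H
  obtain ⟨hV, hV'⟩ := finrank_quotient_comap_Cdvd_of_range_eq (Ctuples F f m γ).subtype γ 0
    (fun _ => N) (by rw [Submodule.range_subtype, Cdvd_zero, inf_top_eq])
  obtain ⟨hW, hW'⟩ := finrank_quotient_comap_Cdvd_of_range_eq (M := H)
    ((Ctuples F f m fun i => r i + γ i).subtype ∘ₗ H.subtype) _ l (fun i => N + r i)
    (by rw [LinearMap.range_comp, Submodule.range_subtype, Submodule.map_comap_subtype])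
  rw [Submodule.comap_comp] at hW hW'
  obtain ⟨hfin, hker, hrank⟩ := (restrictDmap a b hγ).finrank_map_mkQ_range_add_of_map_eq H
    (range_restrictDmap_le a b hγ hl) _ _ (map_restrictDmap_Cdvd a b hγ hp hrN hsN)
    (disjoint_Cdvd_ker_restrictDmap a b hγ hp hrN hsN)
  exact ⟨hfin, hker, hV' ▸ hW' ▸ hrank⟩

end Restrict

theorem statement_12_general
    (p : ℕ) (hp : p.Prime) (F : Type) [Field F]
    (f m : ℕ) [NeZero f]
    (e' : ℕ)
    (r : ZMod f → ℕ) (a : ZMod f → Fˣ) (c : ZMod f → ZMod m)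
    (hr : ∀ i, r i ≤ e') (hc : ∀ i, (p : ZMod m) * c (i - 1) = c i + (r i : ZMod m))
    (s : ZMod f → ℕ) (b : ZMod f → Fˣ) (d : ZMod f → ZMod m)
    (hs : ∀ i, s i ≤ e') (hd : ∀ i, (p : ZMod m) * d (i - 1) = d i + (s i : ZMod m)) :
    let C0 := Ctuples F f m fun i => c i - d i
    let C1 := Ctuples F f m fun i => (r i : ZMod m) + (c i - d i)
    let D := Dmap p F f r s a b
    let Im : Submodule F ↥C1 := Submodule.comap C1.subtype (Submodule.map D C0)
    let Kr : Submodule F ↥C0 := Submodule.comap C0.subtype (LinearMap.ker D)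
    let C1h : Submodule F ↥C1 :=
      Submodule.comap C1.subtype (Cdvd F f fun i => r i + s i - e')
    let ImH : Submodule F (↥C1 ⧸ Im) := Submodule.map Im.mkQ C1h
    FiniteDimensional F ↥ImH ∧ FiniteDimensional F ↥Kr ∧
      Module.finrank F ↥ImH =
        Module.finrank F ↥Kr +
          ∑ i : ZMod f,
            ((Finset.Ico (r i + s i - e') (r i)).filter
              fun j : ℕ => ((j : ℕ) : ZMod m) = (r i : ZMod m) + (c i - d i)).card := by
  intro C0 C1 D Im Kr C1h ImH
  have hγ : ∀ i, (p : ZMod m) * (c (i - 1) - d (i - 1)) + s i = r i + (c i - d i) := fun i => by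
    linear_combination hc i - hd i
  obtain ⟨hfin, hker, hrank⟩ := finrank_map_mkQ_range_restrictDmap_add a b
    (γ := fun i => c i - d i) hγ (N := e' + 1) hp.two_le (fun i => Nat.lt_succ_of_le (hr i))
    (fun i => Nat.le_succ_of_le (hs i)) (l := fun i => r i + s i - e')
    (fun i => by have := hr i; have := hs i; omega)
  rw [range_restrictDmap] at hfin hrank
  rw [ker_restrictDmap] at hker hrank
  refine ⟨hfin, hker, ?_⟩
  have hrank' : Module.finrank F ImH + _ = Module.finrank F Kr + _ := hrank
  rw [Finset.sum_congr rfl fun i _ => card_filter_Ico_add (c i - d i) (Nat.sub_le_of_le_add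
    (Nat.add_le_add_left (hs i) (r i))), Finset.sum_add_distrib] at hrank'
  omega

/-- The image in `coker ∂` of the subspace
`C¹_{≤1} = {(h_i) ∈ C¹ : u^{max(0, r_i+s_i−e')} ∣ h_i}` has dimension
`dim ker ∂ + Σ_i #{max(0, r_i+s_i−e') ≤ j < r_i : j ≡ r_i+c_i−d_i (mod m)}`;  this image is
the subspace of extensions of height at most `1` in
`Ext¹(𝔐(r,a,c), 𝔐(s,b,d))`. -/
theorem statement_12
    (p : ℕ) (hp : p.Prime) (F : Type) [Field F] [Fintype F] [CharP F p]
    (f e m : ℕ) [NeZero f] (he : 1 ≤ e) (hm1 : 1 ≤ m) (hm : p ^ f - 1 ∣ m)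
    (e' : ℕ) (he' : e' = e * m)
    (r : ZMod f → ℕ) (a : ZMod f → Fˣ) (c : ZMod f → ZMod m)
    (hr : ∀ i, r i ≤ e') (hc : ∀ i, (p : ZMod m) * c (i - 1) = c i + (r i : ZMod m))
    (s : ZMod f → ℕ) (b : ZMod f → Fˣ) (d : ZMod f → ZMod m)
    (hs : ∀ i, s i ≤ e') (hd : ∀ i, (p : ZMod m) * d (i - 1) = d i + (s i : ZMod m)) :
    let C0 := Ctuples F f m fun i => c i - d i
    let C1 := Ctuples F f m fun i => (r i : ZMod m) + (c i - d i)
    let D := Dmap p F f r s a b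
    let Im : Submodule F ↥C1 := Submodule.comap C1.subtype (Submodule.map D C0)
    let Kr : Submodule F ↥C0 := Submodule.comap C0.subtype (LinearMap.ker D)
    let C1h : Submodule F ↥C1 :=
      Submodule.comap C1.subtype (Cdvd F f fun i => r i + s i - e')
    let ImH : Submodule F (↥C1 ⧸ Im) := Submodule.map Im.mkQ C1h
    FiniteDimensional F ↥ImH ∧ FiniteDimensional F ↥Kr ∧
      Module.finrank F ↥ImH =
        Module.finrank F ↥Kr +
          ∑ i : ZMod f,
            ((Finset.Ico (r i + s i - e') (r i)).filter
              fun j : ℕ => ((j : ℕ) : ZMod m) = (r i : ZMod m) + (c i - d i)).card :=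
  statement_12_general p hp F f m e' r a c hr hc s b d hs hd
end
end

section
/- Let (r,a,c) and (s,b,d) be two rank one data. Then there exists a tuple (μ_i)_{i∈Z/fZ} of units of F[[u]] such that every nonzero coefficient of μ_i occurs in a degree n with n ≡ c_i − d_i (mod m), and such that b_i·u^{s_i}·φ(μ_{i−1}) = a_i·u^{r_i}·μ_i for all i, if and only if r_i = s_i and c_i = d_i for all i and Π_{i=0}^{f−1} a_i = Π_{i=0}^{f−1} b_i. (Such a tuple is exactly an isomorphism M(r,a,c) ≅ M(s,b,d) of Breuil–Kisin modules with descent data; this is the uniqueness statement in the paper's classification of rank one Breuil–Kisin modules of height at most one with descent data.) -/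
open PowerSeries

noncomputable section

/-!
Comparing the lowest-order terms of `b_i u^{s_i} φ(μ_{i-1}) = a_i u^{r_i} μ_i`, where `φ(μ_{i-1})`
and `μ_i` are units, gives `s_i = r_i` and `b_i τ_{i-1} = a_i τ_i` for the constant terms
`τ_i ∈ Fˣ`; the constant term of `μ_i` sits in degree `0 ≡ c_i - d_i`, so `c_i = d_i`, and taking
the product over `ℤ/f` makes the `τ` cancel. Conversely, when `∏ a_i = ∏ b_i` the relation
`b_i τ_{i-1} = a_i τ_i` can be solved in `Fˣ` by partial products around the cycle `ℤ/f`, and the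
constant series `μ_i = τ_i` work, since `φ` fixes constants.
-/

namespace ZMod

variable {G : Type*} [CommGroup G] {f : ℕ} [NeZero f]

theorem prod_range_natCast {M : Type*} [CommMonoid M] (g : ZMod f → M) :
    ∏ j ∈ Finset.range f, g j = ∏ i, g i :=
  Finset.prod_nbij' Nat.cast val (fun _ _ => Finset.mem_univ _)
    (fun i _ => Finset.mem_range.2 (val_lt i))
    (fun _ hj => val_cast_of_lt (Finset.mem_range.1 hj)) (fun i _ => natCast_zmod_val i)
    (fun _ _ => rfl)

theorem exists_eq_mul_apply_sub_one_of_prod_eq_one (q : ZMod f → G) (hq : ∏ i, q i = 1) :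
    ∃ t : ZMod f → G, ∀ i, t i = q i * t (i - 1) := by
  -- `t` is read off `n ↦ ∏_{j<n} q (j+1)`, which is `f`-periodic exactly because `∏ q = 1`.
  set L : ℕ → G := fun n => ∏ j ∈ Finset.range n, q ((j : ZMod f) + 1)
  have hL : Function.Periodic L f := fun n => by
    have hperiod : ∏ j ∈ Finset.range f, q (((n + j : ℕ) : ZMod f) + 1) = 1 := by
      simp only [Nat.cast_add, add_right_comm _ _ (1 : ZMod f)]
      rw [prod_range_natCast (fun j => q ((n : ZMod f) + 1 + j))]
      exact (Fintype.prod_equiv (Equiv.addLeft _) _ q fun _ => rfl).trans hq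
    simp only [L, Finset.prod_range_add, hperiod, mul_one]
  have hL_cast : ∀ n : ℕ, L (n : ZMod f).val = L n := fun n => by
    rw [val_natCast, hL.map_mod_nat]
  refine ⟨fun i => L i.val, fun i => ?_⟩
  obtain ⟨n, rfl⟩ : ∃ n : ℕ, i = ((n + 1 : ℕ) : ZMod f) :=
    ⟨(i - 1).val, by rw [Nat.cast_succ, natCast_zmod_val, sub_add_cancel]⟩
  beta_reduce
  rw [hL_cast, Nat.cast_succ, add_sub_cancel_right, hL_cast]
  exact (Finset.prod_range_succ _ n).trans (mul_comm _ _)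

theorem exists_mul_apply_sub_one_eq_iff_prod_eq (a b : ZMod f → G) :
    (∃ t : ZMod f → G, ∀ i, b i * t (i - 1) = a i * t i) ↔ ∏ i, a i = ∏ i, b i := by
  constructor
  · rintro ⟨t, ht⟩
    have hshift : ∏ i, t (i - 1) = ∏ i, t i :=
      Fintype.prod_equiv (Equiv.subRight 1) _ t (fun _ => rfl)
    have := Finset.prod_congr rfl fun i (_ : i ∈ Finset.univ) => ht i
    rw [Finset.prod_mul_distrib, Finset.prod_mul_distrib, hshift] at this
    exact (mul_right_cancel this).symm
  · intro hab
    obtain ⟨t, ht⟩ := exists_eq_mul_apply_sub_one_of_prod_eq_one (fun i => b i / a i)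
      (by rw [Finset.prod_div_distrib, hab, div_self'])
    exact ⟨t, fun i => by rw [ht i, ← mul_assoc, mul_div_cancel]⟩

end ZMod

namespace PowerSeries

variable {R : Type*} [CommSemiring R]

theorem coeff_C_mul_X_pow_mul (α : R) (k n : ℕ) (g : R⟦X⟧) :
    coeff n (C α * X ^ k * g) = if k ≤ n then α * coeff (n - k) g else 0 := by
  rw [mul_assoc, coeff_C_mul, coeff_X_pow_mul']
  split_ifs <;> simp

theorem eq_and_mul_constantCoeff_eq_of_C_mul_X_pow_mul_eq {α β : R} {k l : ℕ} {g h : R⟦X⟧}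
    (hg : α * constantCoeff g ≠ 0) (hh : β * constantCoeff h ≠ 0)
    (H : C α * X ^ k * g = C β * X ^ l * h) :
    k = l ∧ α * constantCoeff g = β * constantCoeff h := by
  have hcoeff (n : ℕ) := congrArg (coeff n) H
  simp only [coeff_C_mul_X_pow_mul] at hcoeff
  have hlk : l ≤ k := by
    by_contra hlt
    exact hg (by simpa [hlt] using hcoeff k)
  have hkl : k ≤ l := by
    by_contra hlt
    exact hh (by simpa [hlt] using (hcoeff l).symm)
  obtain rfl := le_antisymm hkl hlk
  simpa using hcoeff k

end PowerSeries

theorem phiPS_C (p : ℕ) {R : Type} [CommRing R] (t : R) : phiPS p R (C t) = C t := by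
  ext n
  simp only [phiPS, LinearMap.coe_mk, AddHom.coe_mk, coeff_mk, coeff_C]
  rcases eq_or_ne n 0 with rfl | hn
  · simp
  by_cases hdvd : p ∣ n
  · have hnp : n / p ≠ 0 := fun h0 => hn (by rw [← Nat.mul_div_cancel' hdvd, h0, mul_zero])
    simp [hdvd, hnp, hn]
  · simp [hdvd, hn]

theorem constantCoeff_phiPS (p : ℕ) {R : Type} [CommRing R] (g : R⟦X⟧) :
    constantCoeff (phiPS p R g) = constantCoeff g := by
  simp [phiPS, ← coeff_zero_eq_constantCoeff]

theorem statement_14_general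
    (p : ℕ) (F : Type) [Field F]
    (f m : ℕ) [NeZero f]
    (r : ZMod f → ℕ) (a : ZMod f → Fˣ) (c : ZMod f → ZMod m)
    (s : ZMod f → ℕ) (b : ZMod f → Fˣ) (d : ZMod f → ZMod m) :
    (∃ μ : ZMod f → PowerSeries F,
      (∀ i, IsUnit (μ i)) ∧
      (∀ (i : ZMod f) (n : ℕ),
        PowerSeries.coeff (R := F) n (μ i) ≠ 0 → (n : ZMod m) = c i - d i) ∧
      (∀ i : ZMod f,
        PowerSeries.C (R := F) (b i : F) * PowerSeries.X ^ s i * phiPS p F (μ (i - 1)) =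
          PowerSeries.C (R := F) (a i : F) * PowerSeries.X ^ r i * μ i)) ↔
    ((∀ i, r i = s i ∧ c i = d i) ∧ (∏ i : ZMod f, a i) = ∏ i : ZMod f, b i) := by
  constructor
  · rintro ⟨μ, hunit, hcoeff, hrel⟩
    have hμ0 (i : ZMod f) : constantCoeff (μ i) ≠ 0 :=
      (isUnit_iff_constantCoeff.1 (hunit i)).ne_zero
    have hlow (i : ZMod f) :=
      eq_and_mul_constantCoeff_eq_of_C_mul_X_pow_mul_eq
        (by simpa [constantCoeff_phiPS] using hμ0 (i - 1)) (by simpa using hμ0 i) (hrel i)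
    refine ⟨fun i => ⟨(hlow i).1.symm, ?_⟩, ?_⟩
    · have := hcoeff i 0 (by rw [coeff_zero_eq_constantCoeff_apply]; exact hμ0 i)
      rwa [Nat.cast_zero, eq_comm, sub_eq_zero] at this
    · refine (ZMod.exists_mul_apply_sub_one_eq_iff_prod_eq a b).1
        ⟨fun i => Units.mk0 _ (hμ0 i), fun i => Units.ext ?_⟩
      simpa [constantCoeff_phiPS] using (hlow i).2
  · rintro ⟨hrc, hab⟩
    obtain ⟨t, ht⟩ := (ZMod.exists_mul_apply_sub_one_eq_iff_prod_eq a b).2 hab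
    refine ⟨fun i => C (t i : F), fun i => (t i).isUnit.map C, fun i n hn => ?_, fun i => ?_⟩
    · obtain rfl : n = 0 := by
        by_contra h
        simp [coeff_C, h] at hn
      simp [(hrc i).2]
    · rw [phiPS_C, (hrc i).1, mul_right_comm, ← map_mul, ← Units.val_mul, ht i, Units.val_mul,
        map_mul, mul_right_comm]

/-- There is a tuple `(μ_i)` of units of `F⟦u⟧`, with all nonzero
coefficients of `μ_i` in degrees `≡ c_i − d_i (mod m)`, satisfying
`b_i u^{s_i} φ(μ_{i−1}) = a_i u^{r_i} μ_i` for all `i` (i.e. an isomorphism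
`𝔐(r,a,c) ≅ 𝔐(s,b,d)`), if and only if `r_i = s_i` and `c_i = d_i` for all `i`, and
`Π a_i = Π b_i`. -/
theorem statement_14
    (p : ℕ) (hp : p.Prime) (F : Type) [Field F] [Fintype F] [CharP F p]
    (f e m : ℕ) [NeZero f] (he : 1 ≤ e) (hm1 : 1 ≤ m) (hm : p ^ f - 1 ∣ m)
    (e' : ℕ) (he' : e' = e * m)
    (r : ZMod f → ℕ) (a : ZMod f → Fˣ) (c : ZMod f → ZMod m)
    (hr : ∀ i, r i ≤ e') (hc : ∀ i, (p : ZMod m) * c (i - 1) = c i + (r i : ZMod m))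
    (s : ZMod f → ℕ) (b : ZMod f → Fˣ) (d : ZMod f → ZMod m)
    (hs : ∀ i, s i ≤ e') (hd : ∀ i, (p : ZMod m) * d (i - 1) = d i + (s i : ZMod m)) :
    (∃ μ : ZMod f → PowerSeries F,
      (∀ i, IsUnit (μ i)) ∧
      (∀ (i : ZMod f) (n : ℕ),
        PowerSeries.coeff (R := F) n (μ i) ≠ 0 → (n : ZMod m) = c i - d i) ∧
      (∀ i : ZMod f,
        PowerSeries.C (R := F) (b i : F) * PowerSeries.X ^ s i * phiPS p F (μ (i - 1)) =
          PowerSeries.C (R := F) (a i : F) * PowerSeries.X ^ r i * μ i)) ↔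
    ((∀ i, r i = s i ∧ c i = d i) ∧ (∏ i : ZMod f, a i) = ∏ i : ZMod f, b i) :=
  statement_14_general p F f m r a c s b d
end
end

section
/- Let (r,a,c) and (s,b,d) be two rank one data. Then dim_F H ≤ ⌈e/(p−1)⌉·f. (Since the paper identifies the group kExt^1 of extensions of M(r,a,c) by M(s,b,d) that split after inverting u with a quotient of H, this yields the paper's bound dim_F kExt^1(M(r,a,c), M(s,b,d)) ≤ ⌈e/(p−1)⌉·f.) -/
/-!
Lift `μ ∈ H` to Laurent series `x_i`. Comparing coefficients of `u ^ (p n + s_{i+1})` in the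
relation between `x_{i+1}` and `φ(x_i)` shows that a nonzero coefficient of `x_i` in a degree `n`
with `(p - 1)(-n) > e'` forces a nonzero coefficient of `x_{i+1}` in a strictly lower such degree.
Laurent series are bounded below, so there are no such coefficients. Hence `μ_i` lives in degrees
`n < 0` with `n ≡ c_i - d_i (mod m)` and `-n ≤ e'/(p - 1) ≤ ⌈e/(p - 1)⌉ m`: at most `⌈e/(p - 1)⌉`
degrees for each of the `f` indices `i`.
-/

open PowerSeries

noncomputable section

/-- The image of `F⟦u⟧` in `F((u))`, as an `F`-subspace. -/
def PSsub (F : Type) [Field F] : Submodule F (LaurentSeries F) :=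
  Submodule.span F (Set.range ⇑(algebraMap (PowerSeries F) (LaurentSeries F)))

/-- The set `H` computing `Hom(𝔐(r,a,c), 𝔐(s,b,d)[1/u]/𝔐(s,b,d))`: tuples `(μ_i)` in
`F((u))/F⟦u⟧` such that every nonzero term of `μ_i` occurs in a degree `n ≡ c_i − d_i (mod m)`
and `a_i·u^{r_i}·μ_i = b_i·u^{s_i}·φ(μ_{i−1})` in `F((u))/F⟦u⟧` for all `i`. -/
def Hset (F : Type) [Field F] (f m : ℕ) (r s : ZMod f → ℕ) (a b : ZMod f → Fˣ)
    (c d : ZMod f → ZMod m) (φL : LaurentSeries F →+ LaurentSeries F) :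
    Set (ZMod f → (LaurentSeries F ⧸ PSsub F)) :=
  {μ | ∃ x : ZMod f → LaurentSeries F,
    (∀ i, Submodule.Quotient.mk (x i) = μ i) ∧
    (∀ (i : ZMod f) (n : ℤ), n < 0 → (x i).coeff n ≠ 0 → (n : ZMod m) = c i - d i) ∧
    (∀ i : ZMod f,
      (Submodule.Quotient.mk (algebraMap (PowerSeries F) (LaurentSeries F)
          (PowerSeries.C (R := F) (a i : F) * PowerSeries.X ^ r i) * x i) :
        LaurentSeries F ⧸ PSsub F) =
      Submodule.Quotient.mk (algebraMap (PowerSeries F) (LaurentSeries F)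
          (PowerSeries.C (R := F) (b i : F) * PowerSeries.X ^ s i) * φL (x (i - 1))))}

section

variable {F : Type} [Field F] {ι : Type*}

namespace PSsub

lemma coeff_eq_zero_of_mem {y : LaurentSeries F} (hy : y ∈ PSsub F) {n : ℤ} (hn : n < 0) :
    y.coeff n = 0 := by
  induction hy using Submodule.span_induction with
  | mem z hz =>
    obtain ⟨w, rfl⟩ := hz
    rw [LaurentSeries.coe_algebraMap, PowerSeries.coeff_coe, if_pos hn]
  | zero => rfl
  | add u v _ _ hu hv => rw [HahnSeries.coeff_add, hu, hv, add_zero]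
  | smul t u _ hu => rw [HahnSeries.coeff_smul, hu, smul_zero]

lemma mem_of_coeff_eq_zero {y : LaurentSeries F} (h : ∀ n < 0, y.coeff n = 0) :
    y ∈ PSsub F := by
  refine Submodule.subset_span ⟨PowerSeries.mk fun k => y.coeff k, ?_⟩
  ext n
  rw [LaurentSeries.coe_algebraMap, PowerSeries.coeff_coe]
  split_ifs with hn
  · exact (h n hn).symm
  · rw [PowerSeries.coeff_mk, Int.natAbs_of_nonneg (not_lt.mp hn)]

/-- The coefficient of `u ^ n` on `F((u)) ⧸ F⟦u⟧`; set to `0` for `n ≥ 0`, where it is not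
well defined. -/
def polarCoeff (n : ℤ) : (LaurentSeries F ⧸ PSsub F) →ₗ[F] F :=
  (PSsub F).liftQ (if n < 0 then HahnSeries.coeff.linearMap n else 0) fun y hy => by
    split_ifs with hn
    · exact coeff_eq_zero_of_mem hy hn
    · rfl

lemma polarCoeff_mk {n : ℤ} (hn : n < 0) (y : LaurentSeries F) :
    polarCoeff n (Submodule.Quotient.mk y) = y.coeff n := by
  simp [polarCoeff, hn]

lemma eq_zero_of_polarCoeff_eq_zero {μ : LaurentSeries F ⧸ PSsub F}
    (h : ∀ n < 0, polarCoeff n μ = 0) : μ = 0 := by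
  induction μ using Submodule.Quotient.induction_on with
  | H y =>
    rw [Submodule.Quotient.mk_eq_zero]
    exact mem_of_coeff_eq_zero fun n hn => polarCoeff_mk hn y ▸ h n hn

lemma coeff_eq_of_mk_eq {α β : F} {k l : ℕ} {x y : LaurentSeries F}
    (h : (Submodule.Quotient.mk (algebraMap (PowerSeries F) (LaurentSeries F)
          (PowerSeries.C α * PowerSeries.X ^ k) * x) : LaurentSeries F ⧸ PSsub F) =
      Submodule.Quotient.mk (algebraMap (PowerSeries F) (LaurentSeries F)
          (PowerSeries.C β * PowerSeries.X ^ l) * y))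
    {j : ℤ} (hj : j < 0) : α * x.coeff (j - k) = β * y.coeff (j - l) := by
  have hmonomial : ∀ (γ : F) (k : ℕ), algebraMap (PowerSeries F) (LaurentSeries F)
      (PowerSeries.C γ * PowerSeries.X ^ k) = HahnSeries.single (k : ℤ) γ := by
    intro γ k
    rw [map_mul, LaurentSeries.coe_algebraMap, HahnSeries.ofPowerSeries_C,
      HahnSeries.ofPowerSeries_X_pow, HahnSeries.C_apply, HahnSeries.single_mul_single,
      zero_add, mul_one]
  have hcoeff : ∀ (γ : F) (k : ℕ) (z : LaurentSeries F),
      (HahnSeries.single (k : ℤ) γ * z).coeff j = γ * z.coeff (j - k) := by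
    intro γ k z
    simpa using HahnSeries.coeff_single_mul_add (r := γ) (x := z) (a := j - k) (b := k)
  have hdiff := coeff_eq_zero_of_mem ((Submodule.Quotient.eq _).mp h) hj
  rwa [HahnSeries.coeff_sub, sub_eq_zero, hmonomial, hmonomial, hcoeff, hcoeff] at hdiff

end PSsub

namespace LaurentSeries

lemma exists_forall_coeff_eq_zero_of_lt [Finite ι]
    (x : ι → LaurentSeries F) : ∃ B : ℤ, ∀ i, ∀ n < B, (x i).coeff n = 0 := by
  obtain ⟨B, hB⟩ := (Set.finite_range fun i => (x i).order).bddBelow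
  exact ⟨B, fun i n hn =>
    HahnSeries.coeff_eq_zero_of_lt_order (hn.trans_le (hB (Set.mem_range_self i)))⟩

lemma coeff_eq_zero_of_descent [Finite ι]
    (x : ι → LaurentSeries F) (next : ι → ι) (P : ℤ → Prop)
    (hstep : ∀ i n, P n → (x i).coeff n ≠ 0 →
      ∃ n' < n, P n' ∧ (x (next i)).coeff n' ≠ 0)
    (i : ι) {n : ℤ} (hn : P n) : (x i).coeff n = 0 := by
  obtain ⟨B, hB⟩ := exists_forall_coeff_eq_zero_of_lt x
  suffices ∀ k : ℕ, ∀ i n, n < B + k → P n → (x i).coeff n = 0 from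
    this ((n - B).toNat + 1) i n (by omega) hn
  intro k
  induction k with
  | zero => exact fun i n hn _ => hB i n (by simpa using hn)
  | succ k ih =>
    intro i n hlt hn
    by_contra hne
    obtain ⟨n', hn'n, hPn', hne'⟩ := hstep i n hn hne
    exact hne' (ih (next i) n' (by omega) hPn')

end LaurentSeries

/-- The `t`-th negative degree `n` with `n ≡ δ (mod m)`, counting down from `-1`. -/
def windowDeg {m : ℕ} (δ : ZMod m) (t : ℕ) : ℤ :=
  -(1 + ((-δ - 1 : ZMod m).val : ℤ) + t * m)

lemma exists_windowDeg_eq {m : ℕ} [NeZero m] {δ : ZMod m} {K : ℕ} {n : ℤ} (hn : n < 0)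
    (hcong : (n : ZMod m) = δ) (hK : -n ≤ K * m) : ∃ t < K, windowDeg δ t = n := by
  set o : ℕ := (-δ - 1 : ZMod m).val
  have hom : (o : ℤ) < m := by exact_mod_cast ZMod.val_lt _
  obtain ⟨t, ht⟩ : (m : ℤ) ∣ -n - 1 - o := by
    rw [← ZMod.intCast_zmod_eq_zero_iff_dvd]
    push_cast
    simp [o, hcong]
  have ht0 : 0 ≤ t := by nlinarith
  have htK : t < K := by nlinarith
  exact ⟨t.toNat, by omega, by simp only [windowDeg, Int.toNat_of_nonneg ht0]; linarith⟩

open PSsub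

def polarSupport (m : ℕ) (δ : ι → ZMod m) (K : ℕ) :
    Submodule F (ι → LaurentSeries F ⧸ PSsub F) where
  carrier := {μ | ∀ i, ∀ n < 0, polarCoeff n (μ i) ≠ 0 → (n : ZMod m) = δ i ∧ -n ≤ K * m}
  zero_mem' i n _ h := absurd (map_zero _) h
  add_mem' {μ ν} hμ hν i n hn h := by
    rw [Pi.add_apply, map_add] at h
    by_cases hμi : polarCoeff n (μ i) = 0
    · exact hν i n hn (by simpa [hμi] using h)
    · exact hμ i n hn hμi
  smul_mem' t μ hμ i n hn h :=
    hμ i n hn fun h0 => h (by rw [Pi.smul_apply, map_smul, h0, smul_zero])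

def windowCoeffs (m : ℕ) (δ : ι → ZMod m) (K : ℕ) :
    (ι → LaurentSeries F ⧸ PSsub F) →ₗ[F] (ι × Fin K → F) :=
  LinearMap.pi fun it => (polarCoeff (windowDeg (δ it.1) it.2)).comp (LinearMap.proj it.1)

lemma injective_windowCoeffs_comp_subtype {m : ℕ} [NeZero m] (δ : ι → ZMod m) (K : ℕ) :
    Function.Injective ((windowCoeffs (F := F) m δ K).comp (polarSupport m δ K).subtype) := by
  rw [← LinearMap.ker_eq_bot, LinearMap.ker_eq_bot']
  rintro ⟨μ, hμ⟩ hzero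
  refine Subtype.ext (funext fun i => eq_zero_of_polarCoeff_eq_zero fun n hn => ?_)
  by_contra hne
  obtain ⟨hcong, hK⟩ := hμ i n hn hne
  obtain ⟨t, htK, rfl⟩ := exists_windowDeg_eq hn hcong hK
  exact hne (congrFun hzero (i, ⟨t, htK⟩))

lemma rank_polarSupport_le [Fintype ι] {m : ℕ} [NeZero m] (δ : ι → ZMod m) (K : ℕ) :
    Module.rank F (polarSupport (F := F) m δ K) ≤ (K * Fintype.card ι : ℕ) := by
  refine (LinearMap.rank_le_of_injective _ (injective_windowCoeffs_comp_subtype δ K)).trans ?_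
  rw [rank_fun', Fintype.card_prod, Fintype.card_fin, mul_comm]

lemma exists_lt_coeff_ne_zero_of_mk_eq {p e' k l : ℕ} (hp : 1 ≤ p) (hk : k ≤ e') (hl : l ≤ e')
    {α β : F} (hβ : β ≠ 0) {x y z : LaurentSeries F}
    (h : (Submodule.Quotient.mk (algebraMap (PowerSeries F) (LaurentSeries F)
          (PowerSeries.C α * PowerSeries.X ^ k) * x) : LaurentSeries F ⧸ PSsub F) =
      Submodule.Quotient.mk (algebraMap (PowerSeries F) (LaurentSeries F)
          (PowerSeries.C β * PowerSeries.X ^ l) * z))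
    {n : ℤ} (hz : z.coeff (p * n) = y.coeff n) (hn : (e' : ℤ) < (p - 1) * -n)
    (hy : y.coeff n ≠ 0) :
    ∃ n' < n, (e' : ℤ) < (p - 1) * -n' ∧ x.coeff n' ≠ 0 := by
  have hp' : (1 : ℤ) ≤ p := by exact_mod_cast hp
  have hk' : (k : ℤ) ≤ e' := by exact_mod_cast hk
  have hl' : (l : ℤ) ≤ e' := by exact_mod_cast hl
  have hlt : p * n + l - k < n := by nlinarith
  have hrel := coeff_eq_of_mk_eq h (j := p * n + l) (by nlinarith)
  rw [add_sub_cancel_right, hz] at hrel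
  refine ⟨p * n + l - k, hlt, by nlinarith, fun h0 => ?_⟩
  rw [h0, mul_zero] at hrel
  exact hy ((mul_eq_zero.mp hrel.symm).resolve_left hβ)

lemma Hset_subset_polarSupport {p f m e' K : ℕ} [NeZero f] (hp : 2 ≤ p)
    (hK : (e' : ℤ) ≤ (p - 1) * (K * m)) {r s : ZMod f → ℕ} (hr : ∀ i, r i ≤ e')
    (hs : ∀ i, s i ≤ e')
    (a b : ZMod f → Fˣ) (c d : ZMod f → ZMod m) {φL : LaurentSeries F →+ LaurentSeries F}
    (hφ : ∀ (x : LaurentSeries F) (k : ℤ), (φL x).coeff (p * k) = x.coeff k) :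
    Hset F f m r s a b c d φL ⊆ polarSupport (F := F) m (c - d) K := by
  rintro μ ⟨x, hmk, hsupp, hrel⟩ i n hn hne
  rw [← hmk i, polarCoeff_mk hn] at hne
  have hdescent : ∀ i n, (e' : ℤ) < (p - 1) * -n → (x i).coeff n = 0 :=
    LaurentSeries.coeff_eq_zero_of_descent x (· + 1) _ fun j k hk hjk =>
      exists_lt_coeff_ne_zero_of_mk_eq (by omega) (hr (j + 1)) (hs (j + 1)) (b (j + 1)).ne_zero
        (by simpa only [add_sub_cancel_right] using hrel (j + 1)) (hφ (x j) k) hk hjk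
  have hsmall : (p - 1) * -n ≤ (e' : ℤ) := not_lt.mp fun h => hne (hdescent i n h)
  have hp' : (2 : ℤ) ≤ p := by exact_mod_cast hp
  exact ⟨hsupp i n hn hne, by nlinarith⟩

end

theorem statement_16_general
    (p : ℕ) (hp : p.Prime) (F : Type) [Field F]
    (f e m : ℕ) [NeZero f] (hm1 : 1 ≤ m)
    (e' : ℕ) (he' : e' = e * m)
    (r : ZMod f → ℕ) (a : ZMod f → Fˣ) (c : ZMod f → ZMod m)
    (hr : ∀ i, r i ≤ e')
    (s : ZMod f → ℕ) (b : ZMod f → Fˣ) (d : ZMod f → ZMod m)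
    (hs : ∀ i, s i ≤ e')
    (φL : LaurentSeries F →+ LaurentSeries F)
    (hφ1 : ∀ (x : LaurentSeries F) (k : ℤ), (φL x).coeff (p * k) = x.coeff k) :
    Module.rank F ↥(Submodule.span F (Hset F f m r s a b c d φL)) ≤
      ((⌈(e : ℚ) / ((p : ℚ) - 1)⌉₊ * f : ℕ) : Cardinal) := by
  have : NeZero m := ⟨by omega⟩
  have hp2 : (2 : ℚ) ≤ p := by exact_mod_cast hp.two_le
  set N := ⌈(e : ℚ) / ((p : ℚ) - 1)⌉₊
  have hN : (e : ℚ) ≤ N * (p - 1) := (div_le_iff₀ (by linarith)).mp (Nat.le_ceil _)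
  have hK : (e' : ℤ) ≤ (p - 1) * (N * m) := by
    have hm : (0 : ℚ) ≤ m := m.cast_nonneg
    have : ((e' : ℤ) : ℚ) ≤ (((p - 1) * (N * m) : ℤ) : ℚ) := by
      push_cast [he']
      nlinarith
    exact_mod_cast this
  calc Module.rank F ↥(Submodule.span F (Hset F f m r s a b c d φL))
      ≤ Module.rank F (polarSupport (F := F) m (c - d) N) :=
        Submodule.rank_mono <| Submodule.span_le.mpr <|
          Hset_subset_polarSupport hp.two_le hK hr hs a b c d hφ1
    _ ≤ _ := by simpa only [ZMod.card] using rank_polarSupport_le (F := F) (c - d) N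

/-- For any two rank one data `(r,a,c)`, `(s,b,d)` one has
`dim_F H ≤ ⌈e/(p−1)⌉·f`; hence the same bound for
`dim_F kExt¹(𝔐(r,a,c), 𝔐(s,b,d))`, which is a quotient of `H`. -/
theorem statement_16
    (p : ℕ) (hp : p.Prime) (F : Type) [Field F] [Fintype F] [CharP F p]
    (f e m : ℕ) [NeZero f] (he : 1 ≤ e) (hm1 : 1 ≤ m) (hm : p ^ f - 1 ∣ m)
    (e' : ℕ) (he' : e' = e * m)
    (r : ZMod f → ℕ) (a : ZMod f → Fˣ) (c : ZMod f → ZMod m)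
    (hr : ∀ i, r i ≤ e') (hc : ∀ i, (p : ZMod m) * c (i - 1) = c i + (r i : ZMod m))
    (s : ZMod f → ℕ) (b : ZMod f → Fˣ) (d : ZMod f → ZMod m)
    (hs : ∀ i, s i ≤ e') (hd : ∀ i, (p : ZMod m) * d (i - 1) = d i + (s i : ZMod m))
    (φL : LaurentSeries F →+ LaurentSeries F)
    (hφ1 : ∀ (x : LaurentSeries F) (k : ℤ), (φL x).coeff (p * k) = x.coeff k)
    (hφ2 : ∀ (x : LaurentSeries F) (n : ℤ), ¬(p : ℤ) ∣ n → (φL x).coeff n = 0) :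
    Module.rank F ↥(Submodule.span F (Hset F f m r s a b c d φL)) ≤
      ((⌈(e : ℚ) / ((p : ℚ) - 1)⌉₊ * f : ℕ) : Cardinal) :=
  statement_16_general p hp F f e m hm1 e' he' r a c hr s b d hs φL hφ1
end
end
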